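/- arXiv:2012.10591 — 2 statements merged into one kernel-verified Lean document; each statement's English description precedes it below -/
import Mathlib

section
/- Let T be the tree on 10 vertices consisting of a path u₁, u₂, u₃, u₄, u₅, u₆ together with four additional leaves w₂, w₃, w₄, w₅, where w_i is adjacent to u_i for i = 2, 3, 4, 5 (a caterpillar of maximum degree 3 with 9 edges). Then T is not (2,3)-orientable. (This disproves the conjecture that every tree of maximum degree 3 is (2,3)-orientable.) -/
open Finset

variable {V : Type*} [Fintype V] [DecidableEq V]

/-- The label induced on an arc `a = (u, v)` by a vertex labeling `f : V → {0,1}`: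
`g(u→v) = f(v) - f(u)`. -/
def arcLabel (f : V → Fin 2) (a : V × V) : ℤ := ((f a.2 : ℕ) : ℤ) - ((f a.1 : ℕ) : ℤ)

/-- The number of arcs of `A` receiving induced label `i`. -/
def labelCount (A : Finset (V × V)) (f : V → Fin 2) (i : ℤ) : ℕ :=
  (A.filter fun a => arcLabel f a = i).card

/-- A vertex labeling `f : V → {0,1}` is friendly if the number of vertices labeled `0`
and the number labeled `1` differ by at most `1`. -/
def Friendly (f : V → Fin 2) : Prop :=
  |((univ.filter fun v => f v = 0).card : ℤ) - ((univ.filter fun v => f v = 1).card : ℤ)| ≤ 1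

/-- A digraph (given by its arc set `A`) is (2,3)-cordial if there is a friendly vertex
labeling whose induced arc labeling `g` satisfies
`-1 ≤ |g⁻¹(i)| - |g⁻¹(j)| ≤ 1` for all `i, j ∈ {-1, 0, 1}`. -/
def Cordial (A : Finset (V × V)) : Prop :=
  ∃ f : V → Fin 2, Friendly f ∧
    ∀ i ∈ ({-1, 0, 1} : Finset ℤ), ∀ j ∈ ({-1, 0, 1} : Finset ℤ),
      -1 ≤ (labelCount A f i : ℤ) - (labelCount A f j : ℤ) ∧
        (labelCount A f i : ℤ) - (labelCount A f j : ℤ) ≤ 1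

/-- The 9 edges of the tree `T` on 10 vertices: the path `u₁u₂u₃u₄u₅u₆`
(vertices `0, …, 5 : Fin 10`) together with leaves `w₂, w₃, w₄, w₅`
(vertices `6, 7, 8, 9`), where `wᵢ` is adjacent to `uᵢ`. -/
def treeEdges : Fin 9 → Fin 10 × Fin 10 :=
  ![(0, 1), (1, 2), (2, 3), (3, 4), (4, 5), (1, 6), (2, 7), (3, 8), (4, 9)]

/-- The orientation of a graph given by an edge list `e` and a choice `o` of a
direction for each edge. -/
def orientBy {n : ℕ} (e : Fin n → V × V) (o : Fin n → Bool) : Finset (V × V) :=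
  univ.image fun i => if o i then e i else ((e i).2, (e i).1)

lemma key' : ∀ a b c d e f' g h i j : Fin 2,
    |((univ.filter fun v => (![a,b,c,d,e,f',g,h,i,j] : Fin 10 → Fin 2) v = 0).card : ℤ)
      - ((univ.filter fun v => (![a,b,c,d,e,f',g,h,i,j] : Fin 10 → Fin 2) v = 1).card : ℤ)| ≤ 1 →
    ((univ.filter fun k : Fin 9 => (![a,b,c,d,e,f',g,h,i,j] : Fin 10 → Fin 2) (treeEdges k).1
        = (![a,b,c,d,e,f',g,h,i,j] : Fin 10 → Fin 2) (treeEdges k).2).card ≠ 3) := by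
  unfold treeEdges
  decide

lemma key (f : Fin 10 → Fin 2) (hf : Friendly f) :
    (univ.filter fun i : Fin 9 => f (treeEdges i).1 = f (treeEdges i).2).card ≠ 3 := by
  have hfe : f = ![f 0, f 1, f 2, f 3, f 4, f 5, f 6, f 7, f 8, f 9] := by
    funext x; fin_cases x <;> rfl
  unfold Friendly at hf
  rw [hfe] at hf ⊢
  exact key' (f 0) (f 1) (f 2) (f 3) (f 4) (f 5) (f 6) (f 7) (f 8) (f 9) hf

set_option maxHeartbeats 2000000 in
lemma inj' : ∀ b0 b1 b2 b3 b4 b5 b6 b7 b8 : Bool, Function.Injective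
    (fun i => if (![b0,b1,b2,b3,b4,b5,b6,b7,b8] : Fin 9 → Bool) i then treeEdges i
      else ((treeEdges i).2, (treeEdges i).1)) := by
  unfold treeEdges
  decide

lemma inj_orient (o : Fin 9 → Bool) : Function.Injective
    (fun i => if o i then treeEdges i else ((treeEdges i).2, (treeEdges i).1)) := by
  have ho : o = ![o 0, o 1, o 2, o 3, o 4, o 5, o 6, o 7, o 8] := by
    funext x; fin_cases x <;> rfl
  rw [ho]
  exact inj' (o 0) (o 1) (o 2) (o 3) (o 4) (o 5) (o 6) (o 7) (o 8)

lemma arcLabel_mem {V : Type*} (f : V → Fin 2) (a : V × V) :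
    arcLabel f a = -1 ∨ arcLabel f a = 0 ∨ arcLabel f a = 1 := by
  unfold arcLabel
  have h1 : (f a.1).val < 2 := (f a.1).isLt
  have h2 : (f a.2).val < 2 := (f a.2).isLt
  omega

lemma count_sum (A : Finset (V × V)) (f : V → Fin 2) :
    labelCount A f (-1) + labelCount A f 0 + labelCount A f 1 = A.card := by
  unfold labelCount
  have h1 := Finset.card_filter_add_card_filter_not
    (s := A) (p := fun a => arcLabel f a = -1)
  have h2 := Finset.card_filter_add_card_filter_not
    (s := A.filter fun a => ¬ arcLabel f a = -1) (p := fun a => arcLabel f a = 0)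
  rw [Finset.filter_filter] at h2
  have e0 : (A.filter fun a => ¬ arcLabel f a = -1 ∧ arcLabel f a = 0)
      = A.filter fun a => arcLabel f a = 0 := by
    apply Finset.filter_congr
    intro a _
    constructor
    · exact fun h => h.2
    · intro h; exact ⟨by omega, h⟩
  have e1 : ((A.filter fun a => ¬ arcLabel f a = -1).filter fun a => ¬ arcLabel f a = 0)
      = A.filter fun a => arcLabel f a = 1 := by
    rw [Finset.filter_filter]
    apply Finset.filter_congr
    intro a _
    have := arcLabel_mem f a
    constructor
    · intro h; rcases this with h'|h'|h' <;> simp_all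
    · intro h; constructor <;> omega
  rw [e0, e1] at h2
  omega

set_option maxHeartbeats 4000000 in
/-- The caterpillar tree `T` (a tree of maximum degree 3) is not (2,3)-orientable:
no orientation of its edges yields a (2,3)-cordial digraph. -/
theorem tree_not_orientable : ¬ ∃ o : Fin 9 → Bool, Cordial (orientBy treeEdges o) := by
  rintro ⟨o, f, hf, h⟩
  set A := orientBy treeEdges o with hA
  have hinj := inj_orient o
  have hcard : A.card = 9 := by
    rw [hA, orientBy, Finset.card_image_of_injective _ hinj]
    simp
  have hmono : labelCount A f 0
      = ((univ.filter fun i : Fin 9 => f (treeEdges i).1 = f (treeEdges i).2).card) := by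
    rw [hA, orientBy, labelCount]
    rw [Finset.filter_image, Finset.card_image_of_injective _ hinj]
    congr 1
    apply Finset.filter_congr
    intro i _
    have h1 : (f (treeEdges i).1).val < 2 := (f (treeEdges i).1).isLt
    have h2 : (f (treeEdges i).2).val < 2 := (f (treeEdges i).2).isLt
    cases hoi : o i <;> simp only [hoi, arcLabel, Bool.false_eq_true, if_false, if_true] <;>
      constructor <;> intro hh <;>
      first
        | (apply Fin.ext
           have := hh
           omega)
        | (have := congrArg Fin.val hh
           omega)
  have hsum := count_sum A f
  have hm1 := h (-1) (by decide) 0 (by decide)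
  have hp1 := h 1 (by decide) 0 (by decide)
  have h0 : labelCount A f 0 = 3 := by omega
  exact key f hf (hmono ▸ h0)
end

section
/- Let G = (V, E) be a simple undirected connected graph. For a friendly vertex labeling f of G, let Λ(G, f) denote the number of edges {u,v} of G with f(u) = f(v). Then G is (2,3)-orientable if and only if there exists a friendly vertex labeling f of G such that Λ(G, f) = ⌈|E|/3⌉ or Λ(G, f) = ⌊|E|/3⌋. -/
open Finset

variable {V : Type*} [Fintype V] [DecidableEq V]

/-- `A` is an orientation of the simple graph `G`: every arc of `A` lies along an
edge of `G`, and each edge `{u,v}` of `G` carries exactly one of the arcs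
`u→v`, `v→u`. -/
def IsOrientation (G : SimpleGraph V) (A : Finset (V × V)) : Prop :=
  (∀ a ∈ A, G.Adj a.1 a.2) ∧ ∀ u v : V, G.Adj u v → ((u, v) ∈ A ↔ (v, u) ∉ A)

/-- A graph is (2,3)-orientable if some orientation of it is (2,3)-cordial. -/
def Orientable (G : SimpleGraph V) : Prop :=
  ∃ A : Finset (V × V), IsOrientation G A ∧ Cordial A

/-- `Λ(G, f)`: the number of edges of `G` both of whose endpoints receive the same
label under `f`. -/
def Lambda (G : SimpleGraph V) [DecidableRel G.Adj] (f : V → Fin 2) : ℕ :=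
  (G.edgeFinset.filter fun e => ∀ u ∈ e, ∀ v ∈ e, f u = f v).card


/-! Under any orientation, an arc gets label `0` exactly when its edge is monochromatic, so the
label-`0` class always has `Λ(G, f)` arcs, and the three classes together have `|E|` arcs. Balance
thus forces `Λ(G, f) ∈ {⌊|E|/3⌋, ⌈|E|/3⌉}`; conversely each bichromatic edge can be oriented to
receive either label `1` or `-1`, so its `|E| - Λ(G, f)` arcs can be split evenly. -/

section Labels

omit [Fintype V] [DecidableEq V]

variable (f : V → Fin 2) (a : V × V)

lemma arcLabel_eq_zero_iff : arcLabel f a = 0 ↔ f a.1 = f a.2 := by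
  simp only [arcLabel, Fin.ext_iff]
  omega

lemma arcLabel_eq_one_iff : arcLabel f a = 1 ↔ f a.1 = 0 ∧ f a.2 = 1 := by
  have := (f a.1).isLt
  have := (f a.2).isLt
  simp only [arcLabel, Fin.ext_iff, Fin.val_zero, Fin.val_one]
  omega

lemma arcLabel_mem_s8 : arcLabel f a ∈ ({-1, 0, 1} : Finset ℤ) := by
  have := (f a.1).isLt
  have := (f a.2).isLt
  simp only [arcLabel, mem_insert, mem_singleton]
  omega

lemma labelCount_neg_one_add_zero_add_one (A : Finset (V × V)) :
    labelCount A f (-1) + labelCount A f 0 + labelCount A f 1 = A.card := by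
  rw [card_eq_sum_card_fiberwise fun a _ => arcLabel_mem_s8 f a, sum_insert (by decide),
    sum_insert (by decide), sum_singleton, add_assoc]
  rfl

lemma monochromatic_sym2_mk_iff (u v : V) :
    (∀ x ∈ s(u, v), ∀ y ∈ s(u, v), f x = f y) ↔ f u = f v := by
  simp only [Sym2.mem_iff, forall_eq_or_imp, forall_eq]
  grind

end Labels

namespace IsOrientation

variable {G : SimpleGraph V} [DecidableRel G.Adj] {A : Finset (V × V)}

/-- Forgetting directions is a bijection from the arcs of an orientation onto the edges. -/
lemma card_filter_sym2_mk (hA : IsOrientation G A) (q : Sym2 V → Prop) [DecidablePred q] :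
    (A.filter fun a => q s(a.1, a.2)).card = (G.edgeFinset.filter q).card := by
  apply card_bij (fun a _ => s(a.1, a.2))
  · intro a ha
    rw [mem_filter] at ha ⊢
    exact ⟨SimpleGraph.mem_edgeFinset.mpr (hA.1 a ha.1), ha.2⟩
  · rintro ⟨u, v⟩ huv ⟨x, y⟩ hxy heq
    rw [mem_filter] at huv hxy
    rcases Sym2.eq_iff.mp heq with ⟨rfl, rfl⟩ | ⟨rfl, rfl⟩
    · rfl
    · exact absurd huv.1 ((hA.2 _ _ (hA.1 _ hxy.1)).mp hxy.1)
  · intro e he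
    induction e using Sym2.ind with
    | _ u v =>
      rw [mem_filter, SimpleGraph.mem_edgeFinset, SimpleGraph.mem_edgeSet] at he
      by_cases huv : (u, v) ∈ A
      · exact ⟨(u, v), mem_filter.mpr ⟨huv, he.2⟩, rfl⟩
      · have hvu : (v, u) ∈ A := not_not.mp (mt (hA.2 u v he.1).mpr huv)
        exact ⟨(v, u), mem_filter.mpr ⟨hvu, Sym2.eq_swap ▸ he.2⟩, Sym2.eq_swap⟩

lemma card_eq (hA : IsOrientation G A) : A.card = G.edgeFinset.card := by
  simpa using hA.card_filter_sym2_mk fun _ => True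

lemma labelCount_zero (hA : IsOrientation G A) (f : V → Fin 2) :
    labelCount A f 0 = Lambda G f := by
  rw [labelCount, Lambda, ← hA.card_filter_sym2_mk]
  congr 1
  exact filter_congr fun a _ => by rw [arcLabel_eq_zero_iff, monochromatic_sym2_mk_iff]

end IsOrientation

omit [DecidableEq V] in
lemma isOrientation_filter_adj (G : SimpleGraph V) [DecidableRel G.Adj] (P : V → V → Prop)
    [DecidableRel P] (hP : ∀ u v, G.Adj u v → (P u v ↔ ¬ P v u)) :
    IsOrientation G (univ.filter fun a : V × V => G.Adj a.1 a.2 ∧ P a.1 a.2) := by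
  refine ⟨fun a ha => (mem_filter.mp ha).2.1, fun u v huv => ?_⟩
  simp only [mem_filter, mem_univ, true_and, huv, huv.symm]
  exact hP u v huv

/-- Orient a chosen set of `k` bichromatic edges from `0` to `1`, the other bichromatic edges
from `1` to `0`, and the monochromatic edges along a fixed enumeration of `V`. -/
lemma exists_isOrientation_labelCount_one (G : SimpleGraph V) [DecidableRel G.Adj]
    (f : V → Fin 2) {k : ℕ} (hk : k + Lambda G f ≤ G.edgeFinset.card) :
    ∃ A, IsOrientation G A ∧ labelCount A f 1 = k := by
  set M := G.edgeFinset.filter fun e => ¬ ∀ u ∈ e, ∀ v ∈ e, f u = f v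
  have hM : Lambda G f + M.card = G.edgeFinset.card := card_filter_add_card_filter_not _
  obtain ⟨S, hSM, rfl⟩ := exists_subset_card_eq (s := M) (n := k) (by omega)
  let σ := Fintype.equivFin V
  let P u v := if f u = f v then σ u < σ v else (s(u, v) ∈ S ↔ f u = 0)
  have hP : ∀ u v, G.Adj u v → (P u v ↔ ¬ P v u) := by
    intro u v huv
    have hσ : σ u ≠ σ v := σ.injective.ne (G.ne_of_adj huv)
    by_cases huv : f u = f v
    · simp only [P, huv, if_true]
      omega
    · have hvu : f v = 0 ↔ ¬ f u = 0 := by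
        rcases Fin.exists_fin_two.mp ⟨f u, rfl⟩ with h | h <;> grind
      simp only [P, huv, Ne.symm huv, if_false, Sym2.eq_swap, hvu]
      tauto
  set A := univ.filter fun a : V × V => G.Adj a.1 a.2 ∧ P a.1 a.2
  have hA : IsOrientation G A := isOrientation_filter_adj G P hP
  have hS : ∀ e ∈ S, e ∈ G.edgeFinset ∧ ¬ ∀ u ∈ e, ∀ v ∈ e, f u = f v :=
    fun e he => mem_filter.mp (hSM he)
  refine ⟨A, hA, ?_⟩
  calc labelCount A f 1 = (A.filter fun a => s(a.1, a.2) ∈ S).card :=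
        congrArg card <| filter_congr fun ⟨u, v⟩ ha => by
          obtain ⟨-, hPuv⟩ := (mem_filter.mp ha).2
          have hmono := monochromatic_sym2_mk_iff f u v
          rw [arcLabel_eq_one_iff]
          by_cases huv : f u = f v
          · have : s(u, v) ∉ S := fun he => (hS _ he).2 (hmono.mpr huv)
            grind
          · simp only [P, huv, if_false] at hPuv
            rcases Fin.exists_fin_two.mp ⟨f u, rfl⟩ with h | h <;>
              rcases Fin.exists_fin_two.mp ⟨f v, rfl⟩ with h' | h' <;> grind
    _ = (G.edgeFinset.filter (· ∈ S)).card := hA.card_filter_sym2_mk (· ∈ S)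
    _ = S.card := by rw [filter_mem_eq_inter, inter_eq_right.mpr fun e he => (hS e he).1]

theorem orientable_iff_lambda_general (G : SimpleGraph V) [DecidableRel G.Adj] :
    Orientable G ↔ ∃ f : V → Fin 2, Friendly f ∧
      (Lambda G f = (G.edgeFinset.card + 2) / 3 ∨ Lambda G f = G.edgeFinset.card / 3) := by
  constructor
  · rintro ⟨A, hA, f, hf, hbal⟩
    have hsum := labelCount_neg_one_add_zero_add_one f A
    have h01 := hbal 0 (by simp) 1 (by simp)
    have h0m := hbal 0 (by simp) (-1) (by simp)
    rw [hA.card_eq, hA.labelCount_zero] at *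
    exact ⟨f, hf, by omega⟩
  · rintro ⟨f, hf, hΛ⟩
    have hΛle : Lambda G f ≤ G.edgeFinset.card := card_filter_le _ _
    obtain ⟨A, hA, h1⟩ := exists_isOrientation_labelCount_one G f
      (k := (G.edgeFinset.card - Lambda G f + 1) / 2) (by omega)
    have hsum := labelCount_neg_one_add_zero_add_one f A
    have h0 := hA.labelCount_zero f
    rw [hA.card_eq] at hsum
    refine ⟨A, hA, f, hf, ?_⟩
    simp only [mem_insert, mem_singleton]
    rintro i (rfl | rfl | rfl) j (rfl | rfl | rfl) <;> omega

/-- A simple connected graph `G` is (2,3)-orientable if and only if there is a friendly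
vertex labeling `f` of `G` with `Λ(G, f) = ⌈|E|/3⌉` or `Λ(G, f) = ⌊|E|/3⌋`. -/
theorem orientable_iff_lambda (G : SimpleGraph V) [DecidableRel G.Adj]
    (hG : G.Connected) :
    Orientable G ↔ ∃ f : V → Fin 2, Friendly f ∧
      (Lambda G f = (G.edgeFinset.card + 2) / 3 ∨ Lambda G f = G.edgeFinset.card / 3) :=
  orientable_iff_lambda_general G
end
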